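/- Let −1 < a < 0 and 0 < p < 1 be real numbers and let m be a positive integer. Then there exist C > 0 and N₀ such that for all integers N ≥ N₀, | ∫₀¹ (1−pt)^N (1−t)^a dt − Σ_{k=0}^{m−1} (−1)^k C(a,k) p^{−k−1} B(k+1, N+1) | ≤ C·N^{−m}, where C(a,k) = a(a−1)⋯(a−k+1)/k! is the generalized binomial coefficient and B denotes the Euler beta function. -/

import Mathlib

open Finset

/-- The Euler beta function `B(a,b) = ∫₀¹ t^(a-1) (1-t)^(b-1) dt`. -/
noncomputable def eulerBeta (a b : ℝ) : ℝ :=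
  ∫ t in (0 : ℝ)..1, t ^ (a - 1) * (1 - t) ^ (b - 1)

/-- The generalized binomial coefficient `C(a,k) = a(a−1)⋯(a−k+1)/k!`. -/
noncomputable def genBinom (a : ℝ) (k : ℕ) : ℝ :=
  (∏ i ∈ Finset.range k, (a - i)) / (k.factorial : ℝ)

/-!
Write `(1 - t)^a = ∑_{k<m} C(a,k) (-t)^k + R_m(t)`. After the substitution `u = p t`, the `k`-th
polynomial term contributes `p^(-k-1)` times `B(k+1, N+1)` minus the tail
`∫_p^1 u^k (1-u)^N du = O((1-p)^N)`. The remainder satisfies `|R_m(t)| ≤ K t^m (1 + (1-t)^a)` on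
`[0, 1]`, and `t^m (1-pt)^N ≤ m! / (pN)^m` because `1 - x ≤ e^(-x)` and `x^m ≤ m! e^x`; since
`(1-t)^a` is integrable for `a > -1`, the remainder contributes `O(N^(-m))`.
-/

open Filter Asymptotics Set MeasureTheory intervalIntegral
open scoped Nat

noncomputable def binomRemainder (a : ℝ) (m : ℕ) (t : ℝ) : ℝ :=
  (1 - t) ^ a - ∑ k ∈ range m, genBinom a k * (-t) ^ k

lemma genBinom_zero (a : ℝ) : genBinom a 0 = 1 := by simp [genBinom]

lemma succ_mul_genBinom_succ (a : ℝ) (k : ℕ) :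
    ((k : ℝ) + 1) * genBinom a (k + 1) = a * genBinom (a - 1) k := by
  have hprod : ∏ i ∈ range (k + 1), (a - i) = a * ∏ i ∈ range k, (a - 1 - i) := by
    rw [prod_range_succ', mul_comm]
    push_cast
    simp only [sub_zero]
    exact congrArg (a * ·) (prod_congr rfl fun i _ => by ring)
  simp only [genBinom, hprod, Nat.factorial_succ, Nat.cast_mul]
  field_simp
  push_cast
  ring

lemma hasDerivAt_sum_genBinom_mul_neg_pow (a : ℝ) (m : ℕ) (t : ℝ) :
    HasDerivAt (fun t => ∑ k ∈ range (m + 1), genBinom a k * (-t) ^ k)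
      (-a * ∑ k ∈ range m, genBinom (a - 1) k * (-t) ^ k) t := by
  induction m with
  | zero => simpa [genBinom_zero] using hasDerivAt_const t (1 : ℝ)
  | succ m ih =>
    have hterm : HasDerivAt (fun t => genBinom a (m + 1) * (-t) ^ (m + 1))
        (-a * (genBinom (a - 1) m * (-t) ^ m)) t := by
      refine (((hasDerivAt_pow (m + 1) (-t)).comp t (hasDerivAt_neg t)).const_mul
        (genBinom a (m + 1))).congr_deriv ?_
      push_cast
      linear_combination -(-t) ^ m * succ_mul_genBinom_succ a m
    simp only [sum_range_succ _ (m + 1)]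
    exact (ih.add hterm).congr_deriv (by rw [sum_range_succ]; ring)

lemma hasDerivAt_binomRemainder (a : ℝ) (m : ℕ) {t : ℝ} (ht : t < 1) :
    HasDerivAt (binomRemainder a (m + 1)) (-a * binomRemainder (a - 1) m t) t := by
  have hpow : HasDerivAt (fun t => (1 - t) ^ a) (-a * (1 - t) ^ (a - 1)) t :=
    (((hasDerivAt_id t).const_sub 1).rpow_const (Or.inl (sub_ne_zero.2 ht.ne'))).congr_deriv
      (by simp only [id]; ring)
  exact (hpow.sub (hasDerivAt_sum_genBinom_mul_neg_pow a m t)).congr_deriv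
    (by simp only [binomRemainder]; ring)

lemma continuousAt_binomRemainder (a : ℝ) (m : ℕ) {t : ℝ} (ht : t < 1) :
    ContinuousAt (binomRemainder a m) t := by
  have : 1 - t ≠ 0 := by linarith
  exact ((continuousAt_const.sub continuousAt_id).rpow_const (Or.inl this)).sub
    (continuous_finsetSum _ fun k _ => by fun_prop).continuousAt

lemma binomRemainder_succ_zero (a : ℝ) (m : ℕ) : binomRemainder a (m + 1) 0 = 0 := by
  simp [binomRemainder, sum_range_succ', genBinom_zero]

lemma exists_abs_binomRemainder_le_mul_pow {b : ℝ} (hb : b < 1) (a : ℝ) (m : ℕ) :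
    ∃ C, ∀ t ∈ Icc 0 b, |binomRemainder a m t| ≤ C * t ^ m := by
  induction m generalizing a with
  | zero =>
    obtain ⟨C, hC⟩ := isCompact_Icc.exists_bound_of_continuousOn fun t ht =>
      (continuousAt_binomRemainder a 0 (ht.2.trans_lt hb)).continuousWithinAt
    exact ⟨C, fun t ht => by simpa using hC t ht⟩
  | succ m ih =>
    obtain ⟨C, hC⟩ := ih (a - 1)
    refine ⟨|a| * C / (m + 1), fun t ht => ?_⟩
    have hderiv : ∀ s ∈ Icc 0 b,
        HasDerivAt (binomRemainder a (m + 1)) (-a * binomRemainder (a - 1) m s) s :=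
      fun s hs => hasDerivAt_binomRemainder a m (hs.2.trans_lt hb)
    have hB : ∀ s, HasDerivAt (fun s => |a| * C / (m + 1) * s ^ (m + 1)) (|a| * C * s ^ m) s :=
      fun s => ((hasDerivAt_pow (m + 1) s).const_mul _).congr_deriv
        (by field_simp; push_cast; ring)
    -- `R_{a,m+1}` vanishes at `0` and its derivative `-a R_{a-1,m}` is bounded by `|a| C s^m`.
    simpa using image_norm_le_of_norm_deriv_right_le_deriv_boundary
      (fun s hs => (hderiv s hs).continuousAt.continuousWithinAt)
      (fun s hs => (hderiv s (Ico_subset_Icc_self hs)).hasDerivWithinAt)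
      (by simp [binomRemainder_succ_zero]) hB
      (fun s hs => by
        rw [norm_mul, norm_neg, Real.norm_eq_abs, Real.norm_eq_abs, mul_assoc]
        exact mul_le_mul_of_nonneg_left (hC s (Ico_subset_Icc_self hs)) (abs_nonneg a)) ht

lemma exists_abs_binomRemainder_le (a : ℝ) (m : ℕ) :
    ∃ K ≥ 0, ∀ t ∈ Icc (0 : ℝ) 1,
      |binomRemainder a m t| ≤ K * (t ^ m * (1 + (1 - t) ^ a)) := by
  obtain ⟨C, hC⟩ := exists_abs_binomRemainder_le_mul_pow (by norm_num : (1 / 2 : ℝ) < 1) a m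
  set D := ∑ k ∈ range m, |genBinom a k|
  have hD : 0 ≤ D := sum_nonneg fun k _ => abs_nonneg _
  -- On `[1/2, 1]` the crude bound `(1 - t)^a + D` is absorbed using `1 ≤ 2^m t^m`.
  refine ⟨max C (2 ^ m * (D + 1)), by positivity, fun t ⟨ht0, ht1⟩ => ?_⟩
  have hrpow : 0 ≤ (1 - t) ^ a := Real.rpow_nonneg (sub_nonneg.2 ht1) a
  rcases le_total t (1 / 2) with ht | ht
  · calc |binomRemainder a m t| ≤ C * t ^ m := hC t ⟨ht0, ht⟩
      _ ≤ max C (2 ^ m * (D + 1)) * (t ^ m * 1) := by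
          rw [mul_one]; gcongr; exact le_max_left _ _
      _ ≤ _ := by gcongr; linarith
  · have hpoly : |∑ k ∈ range m, genBinom a k * (-t) ^ k| ≤ D := by
      refine (abs_sum_le_sum_abs _ _).trans (sum_le_sum fun k _ => ?_)
      rw [abs_mul, abs_pow, abs_neg, abs_of_nonneg ht0]
      exact mul_le_of_le_one_right (abs_nonneg _) (pow_le_one₀ ht0 ht1)
    have htm : 1 ≤ 2 ^ m * t ^ m := by
      rw [← mul_pow]; exact one_le_pow₀ (by linarith)
    calc |binomRemainder a m t|
        ≤ (1 - t) ^ a + D := by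
          unfold binomRemainder
          exact (abs_sub _ _).trans (by rw [abs_of_nonneg hrpow]; linarith)
      _ ≤ 2 ^ m * t ^ m * ((D + 1) * (1 + (1 - t) ^ a)) := by
          refine le_trans ?_ (le_mul_of_one_le_left (by positivity) htm)
          nlinarith
      _ = 2 ^ m * (D + 1) * (t ^ m * (1 + (1 - t) ^ a)) := by ring
      _ ≤ _ := by gcongr; exact le_max_right _ _

lemma natCast_pow_mul_pow_mul_one_sub_pow_le {x : ℝ} (hx0 : 0 ≤ x) (hx1 : x ≤ 1) (m N : ℕ) :
    (N : ℝ) ^ m * x ^ m * (1 - x) ^ N ≤ m ! := by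
  have hexp : (1 - x) ^ N ≤ Real.exp (-(N * x)) := by
    calc (1 - x) ^ N ≤ Real.exp (-x) ^ N :=
          pow_le_pow_left₀ (sub_nonneg.2 hx1) (Real.one_sub_le_exp_neg x) N
      _ = Real.exp (-(N * x)) := by rw [← Real.exp_nat_mul]; ring_nf
  have hpow : (N * x) ^ m ≤ m ! * Real.exp (N * x) := by
    have := Real.pow_div_factorial_le_exp (x := N * x) (by positivity) m
    rw [div_le_iff₀ (by positivity)] at this
    linarith
  calc (N : ℝ) ^ m * x ^ m * (1 - x) ^ N = (N * x) ^ m * (1 - x) ^ N := by ring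
    _ ≤ m ! * Real.exp (N * x) * Real.exp (-(N * x)) := by gcongr
    _ = m ! := by rw [mul_assoc, ← Real.exp_add, add_neg_cancel, Real.exp_zero, mul_one]

lemma intervalIntegrable_one_sub_rpow {a : ℝ} (ha : -1 < a) :
    IntervalIntegrable (fun t => (1 - t) ^ a) volume 0 1 := by
  simpa using ((intervalIntegrable_rpow' (a := 0) (b := 1) ha).comp_sub_left 1).symm

lemma isBigO_integral_one_sub_mul_pow_mul_binomRemainder {a p : ℝ} (ha : -1 < a) (hp0 : 0 < p)
    (hp1 : p ≤ 1) (m : ℕ) :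
    (fun N : ℕ => ∫ t in (0 : ℝ)..1, (1 - p * t) ^ N * binomRemainder a m t) =O[atTop]
      fun N => ((N : ℝ) ^ m)⁻¹ := by
  obtain ⟨K, hK0, hK⟩ := exists_abs_binomRemainder_le a m
  have hw : IntervalIntegrable (fun t => 1 + (1 - t) ^ a) volume 0 1 :=
    intervalIntegrable_const.add (intervalIntegrable_one_sub_rpow ha)
  refine IsBigO.of_bound (K * m ! / p ^ m * ∫ t in (0 : ℝ)..1, 1 + (1 - t) ^ a) ?_
  filter_upwards [eventually_gt_atTop 0] with N hN
  set c := K * m ! / (p ^ m * (N : ℝ) ^ m)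
  have hpt : ∀ t ∈ Ioc (0 : ℝ) 1,
      ‖(1 - p * t) ^ N * binomRemainder a m t‖ ≤ c * (1 + (1 - t) ^ a) := by
    rintro t ⟨ht0, ht1⟩
    have hpt1 : p * t ≤ 1 := by nlinarith
    have hkernel : t ^ m * (1 - p * t) ^ N ≤ m ! / (p ^ m * (N : ℝ) ^ m) := by
      rw [le_div_iff₀ (by positivity)]
      have := natCast_pow_mul_pow_mul_one_sub_pow_le (by positivity) hpt1 m N
      calc t ^ m * (1 - p * t) ^ N * (p ^ m * N ^ m)
          = N ^ m * (p * t) ^ m * (1 - p * t) ^ N := by ring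
        _ ≤ m ! := this
    have hw0 : 0 ≤ 1 + (1 - t) ^ a := by
      have := Real.rpow_nonneg (sub_nonneg.2 ht1) a; linarith
    rw [norm_mul, norm_pow, Real.norm_eq_abs, Real.norm_eq_abs, abs_of_nonneg (by linarith)]
    calc (1 - p * t) ^ N * |binomRemainder a m t|
        ≤ (1 - p * t) ^ N * (K * (t ^ m * (1 + (1 - t) ^ a))) :=
          mul_le_mul_of_nonneg_left (hK t ⟨ht0.le, ht1⟩) (pow_nonneg (by linarith) N)
      _ = K * (t ^ m * (1 - p * t) ^ N) * (1 + (1 - t) ^ a) := by ring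
      _ ≤ c * (1 + (1 - t) ^ a) := by
          unfold c; rw [mul_div_assoc]; gcongr
  calc ‖∫ t in (0 : ℝ)..1, (1 - p * t) ^ N * binomRemainder a m t‖
      ≤ ∫ t in (0 : ℝ)..1, c * (1 + (1 - t) ^ a) :=
        norm_integral_le_of_norm_le zero_le_one (ae_of_all _ hpt) (hw.const_mul c)
    _ = _ := by
        rw [intervalIntegral.integral_const_mul, norm_inv, norm_pow, Real.norm_natCast]
        unfold c
        field_simp

lemma abs_integral_pow_mul_one_sub_pow_le {p : ℝ} (hp0 : 0 ≤ p) (hp1 : p ≤ 1) (k N : ℕ) :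
    |∫ u in p..1, u ^ k * (1 - u) ^ N| ≤ (1 - p) ^ N := by
  have hpt : ∀ u ∈ uIoc p 1, ‖u ^ k * (1 - u) ^ N‖ ≤ (1 - p) ^ N := by
    intro u hu
    rw [uIoc_of_le hp1] at hu
    obtain ⟨hpu, hu1⟩ := hu
    rw [norm_mul, norm_pow, norm_pow, Real.norm_eq_abs, Real.norm_eq_abs,
      abs_of_nonneg (by linarith), abs_of_nonneg (by linarith)]
    calc u ^ k * (1 - u) ^ N ≤ 1 * (1 - p) ^ N :=
          mul_le_mul (pow_le_one₀ (by linarith) hu1)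
            (pow_le_pow_left₀ (by linarith) (by linarith) N) (by positivity) zero_le_one
      _ = (1 - p) ^ N := one_mul _
  calc |∫ u in p..1, u ^ k * (1 - u) ^ N| ≤ (1 - p) ^ N * |1 - p| :=
        norm_integral_le_of_norm_le_const hpt
    _ ≤ (1 - p) ^ N :=
        mul_le_of_le_one_right (pow_nonneg (by linarith) N)
          (by rw [abs_of_nonneg (by linarith)]; linarith)

lemma isBigO_pow_natCast_pow_inv {r : ℝ} (hr0 : 0 ≤ r) (hr1 : r < 1) (m : ℕ) :
    (fun N : ℕ => r ^ N) =O[atTop] fun N => ((N : ℝ) ^ m)⁻¹ := by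
  refine IsBigO.of_bound 1 ?_
  filter_upwards [eventually_gt_atTop 0,
    (tendsto_pow_const_mul_const_pow_of_lt_one m hr0 hr1).eventually_le_const one_pos]
    with N hN hdecay
  rw [one_mul, norm_inv, norm_pow, norm_pow, Real.norm_natCast, Real.norm_of_nonneg hr0,
    ← one_div, le_div_iff₀ (by positivity), mul_comm]
  exact hdecay

lemma eulerBeta_natCast_add_one (k N : ℕ) :
    eulerBeta ((k : ℝ) + 1) ((N : ℝ) + 1) = ∫ t in (0 : ℝ)..1, t ^ k * (1 - t) ^ N := by
  simp only [eulerBeta, add_sub_cancel_right, Real.rpow_natCast]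

lemma integral_pow_mul_one_sub_mul_pow {p : ℝ} (hp : p ≠ 0) (k N : ℕ) :
    ∫ t in (0 : ℝ)..1, t ^ k * (1 - p * t) ^ N =
      p ^ (-(k : ℤ) - 1) *
        (eulerBeta ((k : ℝ) + 1) ((N : ℝ) + 1) - ∫ u in p..1, u ^ k * (1 - u) ^ N) := by
  have hint : ∀ x y : ℝ, IntervalIntegrable (fun u => u ^ k * (1 - u) ^ N) volume x y :=
    fun x y => by apply Continuous.intervalIntegrable; fun_prop
  have hsubst : p ^ k * (∫ t in (0 : ℝ)..1, t ^ k * (1 - p * t) ^ N) =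
      p⁻¹ * ∫ u in (0 : ℝ)..p, u ^ k * (1 - u) ^ N := by
    simpa only [mul_zero, mul_one, mul_pow, mul_assoc, intervalIntegral.integral_const_mul,
      smul_eq_mul] using integral_comp_mul_left (fun u => u ^ k * (1 - u) ^ N) hp (a := 0) (b := 1)
  rw [eulerBeta_natCast_add_one, ← integral_add_adjacent_intervals (hint 0 p) (hint p 1),
    add_sub_cancel_right, zpow_sub₀ hp, zpow_neg, zpow_natCast, zpow_one, div_eq_mul_inv,
    mul_assoc, ← hsubst, inv_mul_cancel_left₀ (pow_ne_zero k hp)]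

lemma integral_sub_sum_eulerBeta_eq {a p : ℝ} (ha : -1 < a) (hp : p ≠ 0) (m N : ℕ) :
    (∫ t in (0 : ℝ)..1, (1 - p * t) ^ N * (1 - t) ^ a) -
        ∑ k ∈ range m, (-1 : ℝ) ^ k * genBinom a k * p ^ (-(k : ℤ) - 1) *
          eulerBeta ((k : ℝ) + 1) ((N : ℝ) + 1) =
      (∫ t in (0 : ℝ)..1, (1 - p * t) ^ N * binomRemainder a m t) -
        ∑ k ∈ range m, (-1 : ℝ) ^ k * genBinom a k * p ^ (-(k : ℤ) - 1) *
          ∫ u in p..1, u ^ k * (1 - u) ^ N := by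
  have hkernel : Continuous fun t : ℝ => (1 - p * t) ^ N := by fun_prop
  have hterm : ∀ k, IntervalIntegrable
      (fun t => (-1 : ℝ) ^ k * genBinom a k * (t ^ k * (1 - p * t) ^ N)) volume 0 1 :=
    fun k => by apply Continuous.intervalIntegrable; fun_prop
  have hpoly : IntervalIntegrable
      (fun t => ∑ k ∈ range m, (-1 : ℝ) ^ k * genBinom a k * (t ^ k * (1 - p * t) ^ N))
      volume 0 1 := by
    apply Continuous.intervalIntegrable; fun_prop
  have hsplit : ∀ t, (1 - p * t) ^ N * binomRemainder a m t =
      (1 - p * t) ^ N * (1 - t) ^ a -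
        ∑ k ∈ range m, (-1 : ℝ) ^ k * genBinom a k * (t ^ k * (1 - p * t) ^ N) := by
    intro t
    simp only [binomRemainder, mul_sub, mul_sum, neg_pow t]
    congr 1
    exact sum_congr rfl fun k _ => by ring
  simp only [hsplit]
  rw [integral_sub ((intervalIntegrable_one_sub_rpow ha).continuousOn_mul hkernel.continuousOn)
      hpoly, integral_finsetSum fun k _ => hterm k]
  simp only [intervalIntegral.integral_const_mul, integral_pow_mul_one_sub_mul_pow hp, mul_sub,
    sum_sub_distrib, mul_assoc]
  ring

lemma isBigO_integral_sub_sum_eulerBeta {a p : ℝ} (ha : -1 < a) (hp0 : 0 < p) (hp1 : p ≤ 1)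
    (m : ℕ) :
    (fun N : ℕ => (∫ t in (0 : ℝ)..1, (1 - p * t) ^ N * (1 - t) ^ a) -
        ∑ k ∈ range m, (-1 : ℝ) ^ k * genBinom a k * p ^ (-(k : ℤ) - 1) *
          eulerBeta ((k : ℝ) + 1) ((N : ℝ) + 1)) =O[atTop] fun N => ((N : ℝ) ^ m)⁻¹ := by
  simp only [integral_sub_sum_eulerBeta_eq ha hp0.ne']
  refine (isBigO_integral_one_sub_mul_pow_mul_binomRemainder ha hp0 hp1 m).sub
    (IsBigO.fun_sum fun k _ => IsBigO.const_mul_left ?_ _)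
  refine IsBigO.trans ?_ (isBigO_pow_natCast_pow_inv (sub_nonneg.2 hp1) (by linarith) m)
  exact IsBigO.of_bound 1 (Eventually.of_forall fun N => by
    simpa [Real.norm_of_nonneg (sub_nonneg.2 hp1)] using
      abs_integral_pow_mul_one_sub_pow_le hp0.le hp1 k N)

theorem integration_Taylor_general
    (a p : ℝ) (ha0 : -1 < a) (hp0 : 0 < p) (hp1 : p < 1)
    (m : ℕ) :
    ∃ C > (0 : ℝ), ∃ N₀ : ℕ, ∀ N ≥ N₀,
      |(∫ t in (0 : ℝ)..1, (1 - p * t) ^ N * (1 - t) ^ a) -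
        ∑ k ∈ Finset.range m, (-1 : ℝ) ^ k * genBinom a k * p ^ (-(k : ℤ) - 1) *
          eulerBeta ((k : ℝ) + 1) ((N : ℝ) + 1)| ≤ C / (N : ℝ) ^ m := by
  obtain ⟨C, hC, hbound⟩ := (isBigO_integral_sub_sum_eulerBeta ha0 hp0 hp1.le m).exists_pos
  obtain ⟨N₀, hN₀⟩ := eventually_atTop.1 hbound.bound
  refine ⟨C, hC, N₀, fun N hN => ?_⟩
  simpa [div_eq_mul_inv] using hN₀ N hN

/-- **Laplace-type expansion of the integral** `∫₀¹ (1−pt)^N (1−t)^a dt`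
(Lemma `lem:integration Taylor`). -/
theorem integration_Taylor
    (a p : ℝ) (ha0 : -1 < a) (ha1 : a < 0) (hp0 : 0 < p) (hp1 : p < 1)
    (m : ℕ) (hm : 0 < m) :
    ∃ C > (0 : ℝ), ∃ N₀ : ℕ, ∀ N ≥ N₀,
      |(∫ t in (0 : ℝ)..1, (1 - p * t) ^ N * (1 - t) ^ a) -
        ∑ k ∈ Finset.range m, (-1 : ℝ) ^ k * genBinom a k * p ^ (-(k : ℤ) - 1) *
          eulerBeta ((k : ℝ) + 1) ((N : ℝ) + 1)| ≤ C / (N : ℝ) ^ m :=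
  integration_Taylor_general a p ha0 hp0 hp1 m
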